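/- arXiv:2111.00650 — 4 statements merged into one kernel-verified Lean document; each statement's English description precedes it below -/
import Mathlib

section
/- Let P be a non-constant complex polynomial that is non-vanishing on the open right half plane H₊ = {z : Re z > 0}. Then for every z ∈ H₊, Re(P'(z)/P(z)) > 0; in particular P' is non-vanishing on H₊. -/
/-!
Since `P` splits over `ℂ`, its logarithmic derivative is `P'/P = ∑_r 1/(z - r)`, summed over the
roots `r` of `P` with multiplicity. All roots lie in the closed left half plane, so for `Re z > 0`
each `z - r` lies in the open right half plane, and so does its reciprocal. There is at least one
root, hence `Re (P'(z)/P(z)) > 0`, which in turn forces `P'(z) ≠ 0`.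
-/

open Polynomial

theorem Complex.re_multiset_sum (s : Multiset ℂ) : s.sum.re = (s.map Complex.re).sum :=
  map_multiset_sum Complex.reAddGroupHom s

theorem Complex.one_div_re_pos {w : ℂ} (hw : 0 < w.re) : 0 < (1 / w).re := by
  rw [one_div, Complex.inv_re]
  exact div_pos hw (Complex.normSq_pos.mpr (Complex.ne_zero_of_re_pos hw))

theorem Polynomial.re_eval_derivative_div_eval_pos {P : ℂ[X]} (hdeg : P.natDegree ≠ 0) {z : ℂ}
    (hz : ∀ r ∈ P.roots, 0 < (z - r).re) : 0 < (P.derivative.eval z / P.eval z).re := by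
  have hP0 : P ≠ 0 := by rintro rfl; simp at hdeg
  have hPz : P.eval z ≠ 0 := fun h ↦ by simpa using hz z ((mem_roots hP0).mpr h)
  rw [(IsAlgClosed.splits P).eval_derivative_div_eval_of_ne_zero hPz, Complex.re_multiset_sum,
    Multiset.map_map]
  have hroots : P.roots ≠ 0 := (IsAlgClosed.splits P).roots_ne_zero hdeg
  calc (0 : ℝ) = (P.roots.map fun _ ↦ (0 : ℝ)).sum := by simp
    _ < _ := Multiset.sum_lt_sum_of_nonempty hroots fun r hr ↦ Complex.one_div_re_pos (hz r hr)

/-- Strong Gauss–Lucas theorem: if a non-constant complex polynomial `P` has no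
zeros in the open right half plane, then `Re (P'(z)/P(z)) > 0` there; in
particular `P'` has no zeros in the open right half plane. -/
theorem strong_gauss_lucas (P : Polynomial ℂ) (hdeg : 1 ≤ P.natDegree)
    (hP : ∀ z : ℂ, 0 < z.re → P.eval z ≠ 0) :
    ∀ z : ℂ, 0 < z.re →
      0 < ((Polynomial.derivative P).eval z / P.eval z).re ∧
        (Polynomial.derivative P).eval z ≠ 0 := by
  intro z hz
  have hroots_re : ∀ r ∈ P.roots, r.re ≤ 0 := fun r hr ↦
    not_lt.mp fun hr_pos ↦ hP r hr_pos (isRoot_of_mem_roots hr)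
  have hpos : 0 < (P.derivative.eval z / P.eval z).re :=
    re_eval_derivative_div_eval_pos (by omega) fun r hr ↦ by
      rw [Complex.sub_re]
      linarith [hroots_re r hr]
  exact ⟨hpos, fun hderiv ↦ by simp [hderiv] at hpos⟩
end

section
/- If a non-constant complex polynomial P has no zeros in some open half plane H ⊂ ℂ, then P' has no zeros in H either. Consequently, the zeros of P' lie in the convex hull of the zeros of P. -/
/-!
Gauss–Lucas puts the zeros of `P'` in the convex hull of the zeros of `P`. If `P` has no zeros
in an open half plane, its zeros lie in the complementary closed half plane, which is convex and
hence contains that hull; so `P'` has no zeros in the open half plane either.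
-/

open Polynomial

theorem Complex.convex_setOf_re_mul_sub_nonpos (u c : ℂ) :
    Convex ℝ {z : ℂ | (u * (z - c)).re ≤ 0} := by
  simp only [mul_sub, sub_re, sub_nonpos]
  exact convex_halfSpace_le (Complex.reLm.comp (LinearMap.mulLeft ℝ u)).isLinear (u * c).re

theorem Polynomial.mem_convexHull_of_eval_derivative_eq_zero {P : ℂ[X]} (hP : 0 < P.natDegree)
    {w : ℂ} (hw : P.derivative.eval w = 0) : w ∈ convexHull ℝ {z : ℂ | P.eval z = 0} := by
  have hP₀ : P ≠ 0 := ne_zero_of_natDegree_gt hP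
  have hw' : w ∈ P.derivative.rootSet ℂ :=
    mem_rootSet.2 ⟨derivative_ne_zero.2 hP.ne', by simpa using hw⟩
  convert rootSet_derivative_subset_convexHull_rootSet (natDegree_pos_iff_degree_pos.1 hP) hw'
  ext z
  simp [mem_rootSet, hP₀]

/-- If a non-constant complex polynomial `P` has no zeros in some open half
plane, then neither does `P'`; consequently the zeros of `P'` lie in the convex
hull of the zeros of `P`. -/
theorem gauss_lucas (P : Polynomial ℂ) (hdeg : 1 ≤ P.natDegree) :
    (∀ (θ : ℝ) (c : ℂ),
        (∀ z : ℂ, 0 < (Complex.exp (θ * Complex.I) * (z - c)).re → P.eval z ≠ 0) →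
        ∀ z : ℂ, 0 < (Complex.exp (θ * Complex.I) * (z - c)).re →
          (Polynomial.derivative P).eval z ≠ 0) ∧
      (∀ w : ℂ, (Polynomial.derivative P).eval w = 0 →
        w ∈ convexHull ℝ {z : ℂ | P.eval z = 0}) := by
  have hull := fun w ↦ mem_convexHull_of_eval_derivative_eq_zero (w := w) hdeg
  refine ⟨fun θ c hH z hz hz' ↦ ?_, hull⟩
  have hroots : {z : ℂ | P.eval z = 0} ⊆ {z | (Complex.exp (θ * Complex.I) * (z - c)).re ≤ 0} :=
    fun a ha ↦ not_lt.1 fun h ↦ hH a h ha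
  exact (convexHull_min hroots (Complex.convex_setOf_re_mul_sub_nonpos _ c) (hull z hz')).not_gt hz
end

section
/- Let g_n be a sequence of analytic functions on a connected open set Ω ⊆ ℂ with Re(g_n(z)) ≥ 0 for all n and all z ∈ Ω. If g_n converges pointwise on a subset of Ω having a limit point in Ω, then g_n converges uniformly on compact subsets of Ω to an analytic function. (Vitali-type theorem under a one-sided bound on real parts.) -/
/-!
For `g` holomorphic with `Re g ≥ 0` on a disc `D(c, R)`, the Schwarz lemma applied to a Cayley
transform of `g` gives Harnack's bound `‖g z‖ ≤ 3 ‖g c‖` on `D(c, R / 2)`. Hence a bound at one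
point of `S` (where the sequence converges) spreads through the connected set `Ω`: the family is
locally uniformly bounded, and the classical Vitali theorem applies.

Vitali's theorem itself needs no normal families. On a disc containing infinitely many
convergence points `s j`, Newton's interpolation formula writes `g m - g n` as a combination of
divided differences at the nodes, which tend to `0`, plus a remainder which the maximum modulus
principle makes geometrically small, uniformly in `m` and `n`.
-/

open Metric Set Filter Topology ComplexConjugate Finset

lemma Complex.norm_sub_lt_norm_add_conj {u v : ℂ} (hu : 0 < u.re) (hv : 0 < v.re) :
    ‖u - v‖ < ‖u + conj v‖ := by
  rw [← sq_lt_sq₀ (norm_nonneg _) (norm_nonneg _), Complex.sq_norm, Complex.sq_norm]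
  simp only [Complex.normSq_apply, Complex.sub_re, Complex.sub_im, Complex.add_re,
    Complex.add_im, Complex.conj_re, Complex.conj_im]
  nlinarith [mul_pos hu hv]

/-- The Cayley transform `w ↦ (w - a) / (w + conj a)` maps the right half-plane into the unit
disc and `a` to `0`, so the Schwarz lemma applies to it after composing with `f`. -/
lemma norm_le_three_mul_norm_of_re_pos {f : ℂ → ℂ} {c z : ℂ} {R : ℝ}
    (hd : DifferentiableOn ℂ f (ball c R)) (hre : ∀ w ∈ ball c R, 0 < (f w).re)
    (hz : z ∈ ball c (R / 2)) : ‖f z‖ ≤ 3 * ‖f c‖ := by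
  have hR : 0 < R := by linarith [nonempty_ball.1 ⟨z, hz⟩]
  have hzR : z ∈ ball c R := ball_subset_ball (by linarith) hz
  set a := f c
  have hden : ∀ w ∈ ball c R, f w + conj a ≠ 0 := fun w hw h => by
    have := congrArg Complex.re h
    simp only [Complex.add_re, Complex.conj_re, Complex.zero_re] at this
    linarith [hre w hw, hre c (mem_ball_self hR)]
  set φ : ℂ → ℂ := fun w => (f w - a) / (f w + conj a)
  have hφd : DifferentiableOn ℂ φ (ball c R) :=
    (hd.sub_const a).div (hd.add_const _) hden
  have hφc : φ c = 0 := by simp [φ, a]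
  have hmaps : MapsTo φ (ball c R) (closedBall (φ c) 1) := fun w hw => by
    rw [hφc, mem_closedBall, dist_zero_right, norm_div]
    exact div_le_one_of_le₀ (Complex.norm_sub_lt_norm_add_conj (hre w hw)
      (hre c (mem_ball_self hR))).le (norm_nonneg _)
  have hφz : ‖φ z‖ ≤ 1 / 2 := by
    have := Complex.dist_le_div_mul_dist_of_mapsTo_ball hφd hmaps hzR
    rw [hφc, dist_zero_right] at this
    calc ‖φ z‖ ≤ 1 / R * dist z c := this
      _ ≤ 1 / R * (R / 2) := by gcongr; exact (mem_ball.1 hz).le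
      _ = 1 / 2 := by field_simp
  have hsolve : f z * (1 - φ z) = a + φ z * conj a := by
    have := hden z hzR
    simp only [φ]
    field_simp
    ring
  have hone : 1 / 2 ≤ ‖1 - φ z‖ := by
    have := norm_sub_norm_le (1 : ℂ) (φ z)
    rw [norm_one] at this
    linarith
  have : ‖f z‖ * (1 / 2) ≤ ‖a‖ * (3 / 2) := calc
    ‖f z‖ * (1 / 2) ≤ ‖f z * (1 - φ z)‖ := by rw [norm_mul]; gcongr
    _ = ‖a + φ z * conj a‖ := by rw [hsolve]
    _ ≤ ‖a‖ + ‖φ z‖ * ‖a‖ := by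
      refine (norm_add_le _ _).trans ?_
      rw [norm_mul, Complex.norm_conj]
    _ ≤ ‖a‖ * (3 / 2) := by nlinarith [norm_nonneg a]
  linarith

lemma norm_le_three_mul_norm_of_re_nonneg {f : ℂ → ℂ} {c z : ℂ} {R : ℝ}
    (hd : DifferentiableOn ℂ f (ball c R)) (hre : ∀ w ∈ ball c R, 0 ≤ (f w).re)
    (hz : z ∈ ball c (R / 2)) : ‖f z‖ ≤ 3 * ‖f c‖ := by
  refine le_of_forall_pos_le_add fun ε hε => ?_
  have hε' : ‖((ε / 4 : ℝ) : ℂ)‖ = ε / 4 := by simp [abs_of_pos hε]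
  have := norm_le_three_mul_norm_of_re_pos (f := fun w => f w + (ε / 4 : ℝ)) (hd.add_const _)
    (fun w hw => by simpa using add_pos_of_nonneg_of_pos (hre w hw) (by positivity)) hz
  have h₁ := norm_sub_le (f z + (ε / 4 : ℝ)) ((ε / 4 : ℝ) : ℂ)
  have h₂ := norm_add_le (f c) ((ε / 4 : ℝ) : ℂ)
  rw [add_sub_cancel_right] at h₁
  linarith

section LocallyBounded

variable {g : ℕ → ℂ → ℂ} {Ω : Set ℂ}

lemma eventually_forall_norm_le_of_re_nonneg {v z : ℂ} {R M : ℝ}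
    (hg : ∀ n, DifferentiableOn ℂ (g n) (ball v R)) (hre : ∀ n, ∀ w ∈ ball v R, 0 ≤ (g n w).re)
    (hM : ∀ n, ‖g n v‖ ≤ M) (hz : z ∈ ball v (R / 2)) :
    ∀ᶠ w in 𝓝 z, ∀ n, ‖g n w‖ ≤ 3 * M := by
  filter_upwards [isOpen_ball.mem_nhds hz] with w hw n
  exact (norm_le_three_mul_norm_of_re_nonneg (hg n) (hre n) hw).trans (by linarith [hM n])

/-- The points near which the family is bounded form an open set, closed in `Ω` by Harnack's
bound. -/
lemma IsPreconnected.exists_eventually_forall_norm_le_of_re_nonneg (hΩo : IsOpen Ω)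
    (hΩc : IsPreconnected Ω) (hg : ∀ n, DifferentiableOn ℂ (g n) Ω)
    (hre : ∀ n, ∀ z ∈ Ω, 0 ≤ (g n z).re) {z₀ : ℂ} (hz₀ : z₀ ∈ Ω) {M₀ : ℝ}
    (hM₀ : ∀ n, ‖g n z₀‖ ≤ M₀) : ∀ z ∈ Ω, ∃ M, ∀ᶠ w in 𝓝 z, ∀ n, ‖g n w‖ ≤ M := by
  have hball : ∀ v R M, ball v R ⊆ Ω → (∀ n, ‖g n v‖ ≤ M) → ∀ z ∈ ball v (R / 2),
      ∃ M, ∀ᶠ w in 𝓝 z, ∀ n, ‖g n w‖ ≤ M := fun v R M hΩ hM z hz =>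
    ⟨3 * M, eventually_forall_norm_le_of_re_nonneg (fun n => (hg n).mono hΩ)
      (fun n w hw => hre n w (hΩ hw)) hM hz⟩
  set U := {z | ∃ M, ∀ᶠ w in 𝓝 z, ∀ n, ‖g n w‖ ≤ M}
  have hUo : IsOpen U := isOpen_iff_mem_nhds.2 fun z ⟨M, hM⟩ => by
    filter_upwards [hM.eventually_nhds] with w hw using ⟨M, hw⟩
  have hU₀ : z₀ ∈ U := by
    obtain ⟨R, hR, hRΩ⟩ := Metric.isOpen_iff.1 hΩo z₀ hz₀
    exact hball _ _ _ hRΩ hM₀ z₀ (mem_ball_self (by positivity))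
  refine fun z hz => hΩc.subset_of_closure_inter_subset hUo ⟨z₀, hz₀, hU₀⟩ ?_ hz
  rintro z ⟨hzU, hzΩ⟩
  obtain ⟨R, hR, hRΩ⟩ := Metric.isOpen_iff.1 hΩo z hzΩ
  obtain ⟨v, ⟨M, hM⟩, hvz⟩ := Metric.mem_closure_iff.1 hzU (R / 4) (by positivity)
  refine hball v (R / 2) M ?_ (fun n => hM.self_of_nhds n) z ?_
  · exact (ball_subset_ball' (by rw [dist_comm]; linarith)).trans hRΩ
  · rw [mem_ball]; linarith

end LocallyBounded

lemma norm_sub_le_two_mul {E : Type*} [SeminormedAddCommGroup E] {c z w : E} {r : ℝ}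
    (hz : z ∈ closedBall c r) (hw : w ∈ closedBall c r) : ‖z - w‖ ≤ 2 * r := by
  rw [← dist_eq_norm]
  linarith [dist_triangle_right z w c, mem_closedBall.1 hz, mem_closedBall.1 hw]

section DividedDifference

variable {𝕜 E : Type*} [NontriviallyNormedField 𝕜] [NormedAddCommGroup E] [NormedSpace 𝕜 E]

/-- `divDiff h s j z` is Newton's divided difference `h[s 0, …, s (j - 1), z]`. -/
noncomputable def divDiff (h : 𝕜 → E) (s : ℕ → 𝕜) : ℕ → 𝕜 → E
  | 0 => h
  | j + 1 => dslope (divDiff h s j) (s j)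

theorem eq_sum_divDiff_add (h : 𝕜 → E) (s : ℕ → 𝕜) (k : ℕ) (z : 𝕜) :
    h z = ∑ i ∈ range k, (∏ l ∈ range i, (z - s l)) • divDiff h s i (s i) +
      (∏ l ∈ range k, (z - s l)) • divDiff h s k z := by
  induction k with
  | zero => simp [divDiff]
  | succ k ih =>
    rw [ih, sum_range_succ, prod_range_succ, mul_smul, divDiff, sub_smul_dslope,
      smul_sub]
    abel

theorem tendsto_divDiff_apply_nhds_zero {ι : Type*} {l : Filter ι} {F : ι → 𝕜 → E}
    {s : ℕ → 𝕜} (hs : Function.Injective s) (hF : ∀ j, Tendsto (fun a => F a (s j)) l (𝓝 0))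
    {i j : ℕ} (hij : i ≤ j) : Tendsto (fun a => divDiff (F a) s i (s j)) l (𝓝 0) := by
  induction i generalizing j with
  | zero => exact hF j
  | succ i ih =>
    have hne : s j ≠ s i := hs.ne (by omega)
    simp only [divDiff, dslope_of_ne _ hne, slope_def_module]
    simpa using ((ih (by omega)).sub (ih le_rfl)).const_smul (s j - s i)⁻¹

lemma norm_prod_sub_le_pow {z : 𝕜} {s : ℕ → 𝕜} {q : ℝ} (hq : ∀ j, ‖z - s j‖ ≤ q) (k : ℕ) :
    ‖∏ l ∈ range k, (z - s l)‖ ≤ q ^ k := by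
  rw [norm_prod]
  exact (prod_le_prod (fun _ _ => norm_nonneg _) fun j _ => hq j).trans_eq
    (by rw [prod_const, card_range])

end DividedDifference

section ComplexDividedDifference

variable {E : Type*} [NormedAddCommGroup E] [NormedSpace ℂ E] [CompleteSpace E]

theorem DifferentiableOn.divDiff {h : ℂ → E} {s : ℕ → ℂ} {U : Set ℂ}
    (hh : DifferentiableOn ℂ h U) (hU : ∀ j, U ∈ 𝓝 (s j)) (j : ℕ) :
    DifferentiableOn ℂ (divDiff h s j) U := by
  induction j with
  | zero => exact hh
  | succ j ih => exact (Complex.differentiableOn_dslope (hU j)).2 ih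

/-- Each division by `w - s j` costs at most `2 / (ρ - r)` on the sphere of radius `ρ`,
and the maximum modulus principle carries the bound inside. -/
theorem norm_divDiff_le {h : ℂ → E} {s : ℕ → ℂ} {c : ℂ} {r ρ M : ℝ}
    (hh : DifferentiableOn ℂ h (closedBall c ρ)) (hs : ∀ j, s j ∈ closedBall c r) (hrρ : r < ρ)
    (hM : ∀ w ∈ closedBall c ρ, ‖h w‖ ≤ M) (j : ℕ) :
    ∀ w ∈ closedBall c ρ, ‖divDiff h s j w‖ ≤ M * (2 / (ρ - r)) ^ j := by
  have hρ : 0 < ρ := (dist_nonneg.trans (hs 0)).trans_lt hrρ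
  have hsρ : ∀ j, s j ∈ closedBall c ρ := fun j => closedBall_subset_closedBall hrρ.le (hs j)
  induction j with
  | zero => simpa [divDiff] using hM
  | succ j ih =>
    have hsphere :
        ∀ w ∈ sphere c ρ, ‖divDiff h s (j + 1) w‖ ≤ M * (2 / (ρ - r)) ^ (j + 1) := by
      intro w hw
      have hdist : ρ - r ≤ ‖w - s j‖ := by
        rw [← dist_eq_norm]
        linarith [mem_sphere.1 hw, mem_closedBall.1 (hs j), dist_triangle w (s j) c]
      have hne : w ≠ s j := by
        rintro rfl
        simp only [sub_self, norm_zero] at hdist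
        linarith
      rw [divDiff, dslope_of_ne _ hne, slope_def_module, norm_smul, norm_inv]
      calc ‖w - s j‖⁻¹ * ‖divDiff h s j w - divDiff h s j (s j)‖
          ≤ (ρ - r)⁻¹ * (M * (2 / (ρ - r)) ^ j + M * (2 / (ρ - r)) ^ j) :=
            mul_le_mul (inv_anti₀ (sub_pos.2 hrρ) hdist) ((norm_sub_le _ _).trans
              (add_le_add (ih w (sphere_subset_closedBall hw)) (ih (s j) (hsρ j))))
              (norm_nonneg _) (inv_pos.2 (sub_pos.2 hrρ)).le
        _ = M * (2 / (ρ - r)) ^ (j + 1) := by ring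
    intro w hw
    have hU : DiffContOnCl ℂ (divDiff h s (j + 1)) (ball c ρ) := by
      refine DifferentiableOn.diffContOnCl ?_
      rw [closure_ball c hρ.ne']
      exact hh.divDiff (fun i => mem_of_superset
        (isOpen_ball.mem_nhds (closedBall_subset_ball hrρ (hs i))) ball_subset_closedBall) _
    refine Complex.norm_le_of_forall_mem_frontier_norm_le isBounded_ball hU ?_ ?_
    · rwa [frontier_ball c hρ.ne']
    · rwa [closure_ball c hρ.ne']

theorem norm_prod_smul_divDiff_le {h : ℂ → E} {s : ℕ → ℂ} {c z : ℂ} {r M : ℝ}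
    (hh : DifferentiableOn ℂ h (ball c (8 * r))) (hM : ∀ w ∈ ball c (8 * r), ‖h w‖ ≤ M)
    (hs : ∀ j, s j ∈ closedBall c r) (hz : z ∈ ball c r) (k : ℕ) :
    ‖(∏ l ∈ range k, (z - s l)) • divDiff h s k z‖ ≤ M * (4 / 5) ^ k := by
  have hr : 0 < r := nonempty_ball.1 ⟨z, hz⟩
  replace hz := ball_subset_closedBall hz
  have hball : closedBall c (6 * r) ⊆ ball c (8 * r) := closedBall_subset_ball (by linarith)
  have hdiv := norm_divDiff_le (hh.mono hball) hs (by linarith)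
    (fun w hw => hM w (hball hw)) k z (closedBall_subset_closedBall (by linarith) hz)
  have hratio : 2 * r * (2 / (6 * r - r)) = 4 / 5 := by field_simp; ring
  rw [norm_smul]
  calc ‖∏ l ∈ range k, (z - s l)‖ * ‖divDiff h s k z‖
      ≤ (2 * r) ^ k * (M * (2 / (6 * r - r)) ^ k) :=
        mul_le_mul (norm_prod_sub_le_pow (fun j => norm_sub_le_two_mul hz (hs j)) k) hdiv
          (norm_nonneg _) (by positivity)
    _ = M * (4 / 5) ^ k := by rw [mul_left_comm, ← mul_pow, hratio]

/-- Newton interpolation at infinitely many nodes of `T`: the first `k` coefficients of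
`f m - f n` tend to zero, and the remainder is `O((4 / 5) ^ k)` uniformly in `m`, `n`. -/
theorem uniformCauchySeqOn_ball_of_infinite {f : ℕ → ℂ → E} {c : ℂ} {r M : ℝ}
    (hd : ∀ n, DifferentiableOn ℂ (f n) (ball c (8 * r)))
    (hM : ∀ n, ∀ z ∈ ball c (8 * r), ‖f n z‖ ≤ M)
    {T : Set ℂ} (hTc : T ⊆ ball c r) (hT : T.Infinite)
    (hconv : ∀ z ∈ T, ∃ l, Tendsto (fun n => f n z) atTop (𝓝 l)) :
    UniformCauchySeqOn f atTop (ball c r) := by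
  set s : ℕ → ℂ := fun j => hT.natEmbedding T j
  have hs : Function.Injective s := Subtype.val_injective.comp (hT.natEmbedding T).injective
  have hsT : ∀ j, s j ∈ T := fun j => (hT.natEmbedding T j).2
  have hsc : ∀ j, s j ∈ closedBall c r := fun j => ball_subset_closedBall (hTc (hsT j))
  set F : ℕ × ℕ → ℂ → E := fun p => f p.1 - f p.2
  have hcoef : ∀ i, Tendsto (fun p => divDiff (F p) s i (s i)) (atTop ×ˢ atTop) (𝓝 0) := by
    refine fun i => tendsto_divDiff_apply_nhds_zero hs (fun j => ?_) le_rfl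
    obtain ⟨l, hl⟩ := hconv (s j) (hsT j)
    simpa [F] using (hl.comp tendsto_fst).sub (hl.comp tendsto_snd)
  intro u hu
  obtain ⟨ε, hε, hεu⟩ := Metric.mem_uniformity_dist.1 hu
  obtain ⟨k, hk⟩ : ∃ k, 2 * M * (4 / 5 : ℝ) ^ k < ε / 2 :=
    ((tendsto_pow_atTop_nhds_zero_of_lt_one (by norm_num) (by norm_num)).const_mul
      (2 * M)).eventually (gt_mem_nhds (by simpa using half_pos hε)) |>.exists
  have hsum : Tendsto (fun p => ∑ i ∈ range k, (2 * r) ^ i * ‖divDiff (F p) s i (s i)‖)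
      (atTop ×ˢ atTop) (𝓝 0) := by
    simpa using tendsto_finsetSum (range k) fun i _ => ((hcoef i).norm).const_mul ((2 * r) ^ i)
  filter_upwards [hsum.eventually (gt_mem_nhds (half_pos hε))] with p hp z hz
  refine hεu ?_
  have hz' := ball_subset_closedBall hz
  have hlead : ‖∑ i ∈ range k, (∏ l ∈ range i, (z - s l)) • divDiff (F p) s i (s i)‖ < ε / 2 :=
    calc _ ≤ ∑ i ∈ range k, ‖(∏ l ∈ range i, (z - s l)) • divDiff (F p) s i (s i)‖ :=
          norm_sum_le _ _
      _ ≤ ∑ i ∈ range k, (2 * r) ^ i * ‖divDiff (F p) s i (s i)‖ := by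
          gcongr with i
          rw [norm_smul]
          exact mul_le_mul_of_nonneg_right
            (norm_prod_sub_le_pow (fun j => norm_sub_le_two_mul hz' (hsc j)) i) (norm_nonneg _)
      _ < ε / 2 := hp
  have hrem := norm_prod_smul_divDiff_le (M := 2 * M) ((hd p.1).sub (hd p.2))
    (fun w hw => (norm_sub_le _ _).trans (by linarith [hM p.1 w hw, hM p.2 w hw])) hsc hz k
  rw [dist_eq_norm, show f p.1 z - f p.2 z = F p z from rfl, eq_sum_divDiff_add (F p) s k z]
  linarith [norm_add_le (∑ i ∈ range k, (∏ l ∈ range i, (z - s l)) • divDiff (F p) s i (s i))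
    ((∏ l ∈ range k, (z - s l)) • divDiff (F p) s k z)]

end ComplexDividedDifference

theorem tendstoLocallyUniformlyOn_limUnder_of_uniformCauchySeqOn {α β : Type*}
    [TopologicalSpace α] [UniformSpace β] [CompleteSpace β] [Nonempty β] {F : ℕ → α → β}
    {U : Set α} (h : ∀ x ∈ U, ∃ t ∈ 𝓝[U] x, UniformCauchySeqOn F atTop t) :
    TendstoLocallyUniformlyOn F (fun x => limUnder atTop (F · x)) atTop U :=
  tendstoLocallyUniformlyOn_of_forall_exists_nhds fun x hx => by
    obtain ⟨t, ht, hF⟩ := h x hx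
    exact ⟨t, ht, hF.tendstoUniformlyOn_of_tendsto fun y hy =>
      tendsto_nhds_limUnder (cauchySeq_tendsto_of_complete (hF.cauchySeq hy))⟩

/-- **Vitali's theorem.** The points with a neighbourhood on which `f` is uniformly Cauchy form an
open set, closed in `Ω` and containing `x₀`. -/
theorem IsPreconnected.tendstoLocallyUniformlyOn_limUnder_of_accPt {E : Type*}
    [NormedAddCommGroup E] [NormedSpace ℂ E] [CompleteSpace E] {f : ℕ → ℂ → E} {Ω S : Set ℂ}
    (hΩo : IsOpen Ω) (hΩc : IsPreconnected Ω) (hd : ∀ n, DifferentiableOn ℂ (f n) Ω)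
    (hb : ∀ z ∈ Ω, ∃ M, ∀ᶠ w in 𝓝 z, ∀ n, ‖f n w‖ ≤ M) {x₀ : ℂ} (hx₀ : x₀ ∈ Ω)
    (hacc : AccPt x₀ (𝓟 S)) (hconv : ∀ z ∈ S, ∃ l, Tendsto (fun n => f n z) atTop (𝓝 l)) :
    TendstoLocallyUniformlyOn f (fun z => limUnder atTop (f · z)) atTop Ω := by
  set W := {z | ∃ r > 0, UniformCauchySeqOn f atTop (ball z r)}
  have hlocal : ∀ z ∈ Ω, ∃ r > 0, ∀ T ⊆ ball z r, T.Infinite →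
      (∀ w ∈ T, ∃ l, Tendsto (fun n => f n w) atTop (𝓝 l)) → z ∈ W := by
    intro z hz
    obtain ⟨M, hM⟩ := hb z hz
    obtain ⟨ρ, hρ, hρM⟩ := Metric.eventually_nhds_iff_ball.1 ((hΩo.eventually_mem hz).and hM)
    refine ⟨ρ / 8, by positivity, fun T hTz hT hTconv => ⟨ρ / 8, by positivity, ?_⟩⟩
    rw [show ρ = 8 * (ρ / 8) by ring] at hρM
    exact uniformCauchySeqOn_ball_of_infinite (fun n => (hd n).mono fun y hy => (hρM y hy).1)
      (fun n y hy => (hρM y hy).2 n) hTz hT hTconv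
  have hWo : IsOpen W := Metric.isOpen_iff.2 fun z ⟨r, hr, hz⟩ => ⟨r, hr, fun w hw =>
    ⟨r - dist w z, sub_pos.2 hw, hz.mono (ball_subset_ball' (by linarith))⟩⟩
  have hx₀W : x₀ ∈ W := by
    obtain ⟨r, hr, hW⟩ := hlocal x₀ hx₀
    have hT := hacc.nhds_inter (ball_mem_nhds x₀ hr)
    exact hW _ inter_subset_left (Set.Infinite.of_accPt hT) fun w hw => hconv w hw.2
  have hΩW : Ω ⊆ W := by
    refine hΩc.subset_of_closure_inter_subset hWo ⟨x₀, hx₀, hx₀W⟩ ?_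
    rintro z ⟨hzW, hzΩ⟩
    obtain ⟨r, hr, hW⟩ := hlocal z hzΩ
    obtain ⟨w, ⟨ρ, hρ, hw⟩, hwz⟩ := Metric.mem_closure_iff.1 hzW r hr
    have hT : ball w ρ ∩ ball z r ∈ 𝓝 w :=
      inter_mem (ball_mem_nhds w hρ) (isOpen_ball.mem_nhds (by rwa [mem_ball, dist_comm]))
    exact hW _ inter_subset_right (infinite_of_mem_nhds w hT) fun y hy =>
      cauchySeq_tendsto_of_complete (hw.cauchySeq hy.1)
  refine tendstoLocallyUniformlyOn_limUnder_of_uniformCauchySeqOn fun z hz => ?_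
  obtain ⟨r, hr, hz⟩ := hΩW hz
  exact ⟨ball z r, mem_nhdsWithin_of_mem_nhds (ball_mem_nhds z hr), hz⟩

theorem vitali_real_part_general (Ω : Set ℂ) (hΩo : IsOpen Ω) (hΩc : IsConnected Ω)
    (g : ℕ → ℂ → ℂ) (hg : ∀ n, DifferentiableOn ℂ (g n) Ω)
    (hre : ∀ n, ∀ z ∈ Ω, 0 ≤ (g n z).re)
    (S : Set ℂ)
    (x₀ : ℂ) (hx₀ : x₀ ∈ Ω) (hacc : x₀ ∈ closure (S \ {x₀}))
    (hconv : ∀ z ∈ S, ∃ l : ℂ, Filter.Tendsto (fun n => g n z) Filter.atTop (nhds l)) :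
    ∃ G : ℂ → ℂ, DifferentiableOn ℂ G Ω ∧
      TendstoLocallyUniformlyOn g G Filter.atTop Ω := by
  have hacc : AccPt x₀ (𝓟 S) := by
    rwa [accPt_iff_frequently_nhdsNE, ← mem_closure_ne_iff_frequently_within]
  obtain ⟨z₀, hz₀Ω, hz₀S⟩ :=
    (Set.Infinite.of_accPt (hacc.nhds_inter (hΩo.mem_nhds hx₀))).nonempty
  obtain ⟨l, hl⟩ := hconv z₀ hz₀S
  obtain ⟨M, hM⟩ := hl.norm.bddAbove_range
  have hb := hΩc.isPreconnected.exists_eventually_forall_norm_le_of_re_nonneg hΩo hg hre hz₀Ω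
    fun n => hM (mem_range_self n)
  have hG :=
    hΩc.isPreconnected.tendstoLocallyUniformlyOn_limUnder_of_accPt hΩo hg hb hx₀ hacc hconv
  exact ⟨_, hG.differentiableOn (Eventually.of_forall hg) hΩo, hG⟩

/-- Vitali-type convergence theorem under a one-sided bound on real parts:
analytic functions on a connected open set with nonnegative real parts which
converge pointwise on a set with a limit point converge locally uniformly to an
analytic function. -/
theorem vitali_real_part (Ω : Set ℂ) (hΩo : IsOpen Ω) (hΩc : IsConnected Ω)
    (g : ℕ → ℂ → ℂ) (hg : ∀ n, DifferentiableOn ℂ (g n) Ω)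
    (hre : ∀ n, ∀ z ∈ Ω, 0 ≤ (g n z).re)
    (S : Set ℂ) (hS : S ⊆ Ω)
    (x₀ : ℂ) (hx₀ : x₀ ∈ Ω) (hacc : x₀ ∈ closure (S \ {x₀}))
    (hconv : ∀ z ∈ S, ∃ l : ℂ, Filter.Tendsto (fun n => g n z) Filter.atTop (nhds l)) :
    ∃ G : ℂ → ℂ, DifferentiableOn ℂ G Ω ∧
      TendstoLocallyUniformlyOn g G Filter.atTop Ω :=
  vitali_real_part_general Ω hΩo hΩc g hg hre S x₀ hx₀ hacc hconv
end

section
/- Fix R > 0 and sets A₁,…,A_k ⊂ ℤ^ν, each with diameter at most R (diam A = max_{j,m∈A}|j−m| in some fixed norm). If p, ℓ ∈ ℤ^ν satisfy |p − ℓ| > kR, then the index set {1,…,k} can be partitioned into P and Q such that ({p} ∪ ⋃_{j∈P} A_j) and ({ℓ} ∪ ⋃_{j∈Q} A_j) are disjoint. -/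
/-!
Join two of the sets `A j` when they meet, and let `P` be the union of the connected components
of this intersection graph that contain `p`. The sets indexed by `Q = Pᶜ` then meet neither `p` nor any
`A j` with `j ∈ P`. A point of `A j` with `j ∈ P` is linked to `p` by a path of at most `k` sets,
each of diameter at most `R`, so it lies within `k R` of `p` and cannot be `ℓ`.
-/

open SimpleGraph

def intersectionGraph {ι α : Type*} (A : ι → Set α) : SimpleGraph ι where
  Adj i j := i ≠ j ∧ (A i ∩ A j).Nonempty
  symm := ⟨fun _ _ h => ⟨h.1.symm, Set.inter_comm (A _) _ ▸ h.2⟩⟩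
  loopless := ⟨fun _ h => h.1 rfl⟩

theorem intersectionGraph_adj {ι α : Type*} {A : ι → Set α} {i j : ι} :
    (intersectionGraph A).Adj i j ↔ i ≠ j ∧ (A i ∩ A j).Nonempty :=
  Iff.rfl

section PseudoMetricSpace

variable {ι α : Type*} [PseudoMetricSpace α] {A : ι → Set α} {R : ℝ}

theorem dist_le_of_walk_intersectionGraph (hdiam : ∀ i, ∀ x ∈ A i, ∀ y ∈ A i, dist x y ≤ R)
    {i j : ι} (w : (intersectionGraph A).Walk i j) {x y : α} (hx : x ∈ A i) (hy : y ∈ A j) :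
    dist x y ≤ (w.length + 1) * R := by
  induction w generalizing x with
  | nil => simpa using hdiam _ x hx y hy
  | cons hadj w ih =>
    obtain ⟨-, z, hzi, hzj⟩ := intersectionGraph_adj.1 hadj
    calc dist x y ≤ dist x z + dist z y := dist_triangle x z y
      _ ≤ R + (w.length + 1) * R := add_le_add (hdiam _ x hx z hzi) (ih hzj hy)
      _ = ((w.cons hadj).length + 1) * R := by simp only [Walk.length_cons]; push_cast; ring

theorem dist_le_card_mul_of_reachable [Fintype ι]
    (hdiam : ∀ i, ∀ x ∈ A i, ∀ y ∈ A i, dist x y ≤ R) {i j : ι}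
    (hij : (intersectionGraph A).Reachable i j) {x y : α} (hx : x ∈ A i) (hy : y ∈ A j) :
    dist x y ≤ Fintype.card ι * R := by
  classical
  obtain ⟨w, hw⟩ := hij.exists_isPath
  have hR : 0 ≤ R := dist_self x ▸ hdiam i x hx x hx
  have hlen : (w.length + 1 : ℝ) ≤ Fintype.card ι := by exact_mod_cast hw.length_lt
  exact (dist_le_of_walk_intersectionGraph hdiam w hx hy).trans
    (mul_le_mul_of_nonneg_right hlen hR)

theorem exists_separating_set [Fintype ι] (hR : 0 ≤ R)
    (hdiam : ∀ i, ∀ x ∈ A i, ∀ y ∈ A i, dist x y ≤ R) {p ℓ : α}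
    (hfar : Fintype.card ι * R < dist p ℓ) :
    ∃ P : Set ι, Disjoint (insert p (⋃ j ∈ P, A j)) (insert ℓ (⋃ j ∈ Pᶜ, A j)) := by
  let P : Set ι := {j | ∃ i, p ∈ A i ∧ (intersectionGraph A).Reachable i j}
  have hp_notMem : ∀ j ∉ P, p ∉ A j := fun j hj hpj => hj ⟨j, hpj, Reachable.refl j⟩
  have hℓ_notMem : ∀ j ∈ P, ℓ ∉ A j := by
    rintro j ⟨i, hpi, hij⟩ hℓj
    exact (dist_le_card_mul_of_reachable hdiam hij hpi hℓj).not_gt hfar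
  have hpℓ : p ≠ ℓ := by
    rintro rfl
    exact (mul_nonneg (Nat.cast_nonneg _) hR).not_gt (dist_self p ▸ hfar)
  refine ⟨P, Set.disjoint_left.2 ?_⟩
  simp only [Set.mem_insert_iff, Set.mem_iUnion, Set.mem_compl_iff, exists_prop]
  rintro x (rfl | ⟨j, hj, hxj⟩) (rfl | ⟨j', hj', hxj'⟩)
  · exact hpℓ rfl
  · exact hp_notMem j' hj' hxj'
  · exact hℓ_notMem j hj hxj
  · obtain rfl | hne := eq_or_ne j j'
    · exact hj' hj
    obtain ⟨i, hpi, hij⟩ := hj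
    exact hj' ⟨i, hpi, hij.trans (intersectionGraph_adj.2 ⟨hne, x, hxj, hxj'⟩).reachable⟩

end PseudoMetricSpace

theorem separation_lemma_general (ν k : ℕ) (R : ℝ) (hR : 0 < R)
    (A : Fin k → Finset (Fin ν → ℤ))
    (hdiam : ∀ j, ∀ x ∈ A j, ∀ y ∈ A j, ‖x - y‖ ≤ R)
    (p ℓ : Fin ν → ℤ) (hfar : (k : ℝ) * R < ‖p - ℓ‖) :
    ∃ P Q : Finset (Fin k), P ∪ Q = Finset.univ ∧ Disjoint P Q ∧
      Disjoint
        (insert p (⋃ j ∈ (P : Set (Fin k)), (A j : Set (Fin ν → ℤ))))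
        (insert ℓ (⋃ j ∈ (Q : Set (Fin k)), (A j : Set (Fin ν → ℤ)))) := by
  classical
  simp only [← dist_eq_norm] at hdiam hfar
  obtain ⟨P, hP⟩ := exists_separating_set (A := fun j => (A j : Set (Fin ν → ℤ))) hR.le hdiam
    (by rwa [Fintype.card_fin])
  refine ⟨P.toFinset, P.toFinsetᶜ, Finset.union_compl _, disjoint_compl_right, ?_⟩
  simpa only [Finset.coe_compl, Set.coe_toFinset] using hP

/-- Geometric separation lemma: sets `A₁,…,A_k ⊂ ℤ^ν` of diameter at most `R`
can be split into two groups, one staying away from `ℓ` together with `p`, the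
other staying away from `p` together with `ℓ`, whenever `‖p - ℓ‖ > k R`. -/
theorem separation_lemma (ν k : ℕ) (R : ℝ) (hR : 0 < R)
    (A : Fin k → Finset (Fin ν → ℤ)) (hne : ∀ j, (A j).Nonempty)
    (hdiam : ∀ j, ∀ x ∈ A j, ∀ y ∈ A j, ‖x - y‖ ≤ R)
    (p ℓ : Fin ν → ℤ) (hfar : (k : ℝ) * R < ‖p - ℓ‖) :
    ∃ P Q : Finset (Fin k), P ∪ Q = Finset.univ ∧ Disjoint P Q ∧
      Disjoint
        (insert p (⋃ j ∈ (P : Set (Fin k)), (A j : Set (Fin ν → ℤ))))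
        (insert ℓ (⋃ j ∈ (Q : Set (Fin k)), (A j : Set (Fin ν → ℤ)))) :=
  separation_lemma_general ν k R hR A hdiam p ℓ hfar
end
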